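/- (Remark 4.4, membership criterion.) Let n ≥ 1, 1 ≤ p < ∞, 0 ≤ λ ≤ 1, let ν > −n be real, a ∈ ℝⁿ, x₀ ∈ ℝⁿ, r₀ > 0, and suppose a ∈ B(x₀,r₀). Let w(y) = |y − a|^{ν}. Then χ_{B(x₀,r₀)} belongs to L^{p,λ}(ℝⁿ,w) (i.e. ‖χ_{B(x₀,r₀)}‖_{p,λ;w} < ∞) if and only if ν ≥ nλ − n. -/

import Mathlib

/-!
Translation and scaling give `∫_{B(a,R)} |y - a|^ν dy = c R^{n+ν}` with `0 < c < ∞` because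
`ν > -n`. Hence on the small balls `B(a,r) ⊆ B(x₀,r₀)` the Morrey quotient of `χ_{B(x₀,r₀)}` is a
positive multiple of `r^{n+ν-nλ}`, which stays bounded as `r → 0` only if `n + ν - nλ ≥ 0`.
Conversely, if this exponent is nonnegative, the quotient on a ball `B(x,r)` with `r ≤ r₀` is
`O(r^{n+ν-nλ})` when `ν ≤ 0` (either `B(x,r) ⊆ B(a,3r)`, or the weight is at most `r^ν` on it) and
`O(r^{n-nλ})` when `ν ≥ 0` (the weight is bounded on `B(x₀,r₀)`); for `r ≥ r₀` it is at most
`|B(0,r₀)|^{-λ}` times the finite weighted measure of `B(x₀,r₀)`.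
-/

open MeasureTheory

/-- The weighted Morrey norm on `ℝⁿ`: supremum over all balls `B(x,r)` of
`( |B(x,r)|^{-λ} ∫_{B(x,r)} |f|^p w )^{1/p}`, with values in `[0,∞]`. -/
noncomputable def morreyNorm {n : ℕ} (p lam : ℝ)
    (w f : EuclideanSpace ℝ (Fin n) → ℝ) : ENNReal :=
  ⨆ (x : EuclideanSpace ℝ (Fin n)) (r : ℝ) (_ : 0 < r),
    ((volume (Metric.ball x r)) ^ (-lam) *
      ∫⁻ y in Metric.ball x r, ENNReal.ofReal (|f y| ^ p * w y)) ^ (1 / p)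

open Metric Set Filter Topology Module
open scoped ENNReal

theorem nonneg_of_eventually_rpow_le {e M : ℝ} (h : ∀ᶠ r in 𝓝[>] 0, r ^ e ≤ M) : 0 ≤ e := by
  by_contra! he
  obtain ⟨r, hle, hgt⟩ := (h.and ((tendsto_rpow_neg_nhdsGT_zero he).eventually_gt_atTop M)).exists
  linarith

theorem ofReal_abs_indicator_one_rpow_mul {α : Type*} {p : ℝ} (hp : 0 < p) (s : Set α) (w : α → ℝ) :
    (fun y => ENNReal.ofReal (|s.indicator 1 y| ^ p * w y)) =
      s.indicator fun y => ENNReal.ofReal (w y) := by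
  ext y
  by_cases hy : y ∈ s <;> simp [hy, hp.ne']

noncomputable def morreyQuotient {X : Type*} [PseudoMetricSpace X] [MeasurableSpace X]
    (μ : Measure X) (lam : ℝ) (g : X → ℝ≥0∞) (x : X) (r : ℝ) : ℝ≥0∞ :=
  μ (ball x r) ^ (-lam) * ∫⁻ y in ball x r, g y ∂μ

theorem morreyNorm_eq_iSup_morreyQuotient {n : ℕ} (p lam : ℝ) (w f : EuclideanSpace ℝ (Fin n) → ℝ) :
    morreyNorm p lam w f = ⨆ (x) (r : ℝ) (_ : 0 < r),
      morreyQuotient volume lam (fun y => ENNReal.ofReal (|f y| ^ p * w y)) x r ^ (1 / p) :=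
  rfl

theorem morreyNorm_lt_top_iff {n : ℕ} {p : ℝ} (hp : 0 < p) (lam : ℝ)
    (w f : EuclideanSpace ℝ (Fin n) → ℝ) :
    morreyNorm p lam w f < ⊤ ↔ ∃ C ≠ ⊤, ∀ x r, 0 < r →
      morreyQuotient volume lam (fun y => ENNReal.ofReal (|f y| ^ p * w y)) x r ≤ C := by
  rw [morreyNorm_eq_iSup_morreyQuotient]
  constructor
  · intro hfin
    refine ⟨_, (ENNReal.rpow_lt_top_of_nonneg hp.le hfin.ne).ne, fun x r hr => ?_⟩
    calc _ = (morreyQuotient volume lam (fun y => ENNReal.ofReal (|f y| ^ p * w y)) x r ^ (1 / p))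
          ^ p := by rw [← ENNReal.rpow_mul, one_div_mul_cancel hp.ne', ENNReal.rpow_one]
      _ ≤ _ := by
        gcongr
        exact le_iSup₂_of_le x r (le_iSup_of_le hr le_rfl)
  · rintro ⟨C, hC, hbound⟩
    refine lt_of_le_of_lt (iSup₂_le fun x r => iSup_le fun hr => ?_)
      (ENNReal.rpow_lt_top_of_nonneg (y := 1 / p) (by positivity) hC)
    exact ENNReal.rpow_le_rpow (hbound x r hr) (by positivity)

theorem morreyQuotient_le_of_le_radius {E : Type*} [NormedAddCommGroup E] [MeasurableSpace E]
    [BorelSpace E] (μ : Measure E) [μ.IsAddHaarMeasure] {lam : ℝ} (hlam : 0 ≤ lam)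
    (g : E → ℝ≥0∞) (x : E) {r₀ r : ℝ} (hr : r₀ ≤ r) :
    morreyQuotient μ lam g x r ≤ μ (ball 0 r₀) ^ (-lam) * ∫⁻ y, g y ∂μ := by
  rw [morreyQuotient, ← Measure.addHaar_ball_center μ x, ENNReal.rpow_neg, ENNReal.rpow_neg]
  gcongr
  exact Measure.restrict_le_self

section PowerWeight

variable {E : Type*} [NormedAddCommGroup E] [NormedSpace ℝ E] [FiniteDimensional ℝ E]
  [MeasurableSpace E] [BorelSpace E] (μ : Measure E) [μ.IsAddHaarMeasure]

noncomputable def unitBallRpowIntegral (ν : ℝ) : ℝ≥0∞ :=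
  ∫⁻ y in ball (0 : E) 1, ENNReal.ofReal (‖y‖ ^ ν) ∂μ

theorem setLIntegral_ball_zero_eq_smul {R : ℝ} (hR : 0 < R) {f : E → ℝ≥0∞} (hf : Measurable f) :
    ∫⁻ y in ball 0 R, f y ∂μ =
      ENNReal.ofReal (R ^ finrank ℝ E) * ∫⁻ x in ball 0 1, f (R • x) ∂μ := by
  have hpre : (fun x : E => R • x) ⁻¹' ball 0 R = ball 0 1 := by
    ext x
    simp [norm_smul, abs_of_pos hR, hR]
  rw [← hpre, ← setLIntegral_map measurableSet_ball hf (measurable_const_smul R),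
    Measure.map_addHaar_smul μ hR.ne', Measure.restrict_smul, lintegral_smul_measure,
    abs_of_pos (by positivity), smul_eq_mul, ← mul_assoc, ← ENNReal.ofReal_mul (by positivity),
    mul_inv_cancel₀ (by positivity), ENNReal.ofReal_one, one_mul]

theorem setLIntegral_ball_zero_norm_rpow {R : ℝ} (hR : 0 < R) (ν : ℝ) :
    ∫⁻ y in ball (0 : E) R, ENNReal.ofReal (‖y‖ ^ ν) ∂μ =
      ENNReal.ofReal (R ^ (finrank ℝ E + ν)) * unitBallRpowIntegral μ ν := by
  have hmeas : Measurable fun y : E => ENNReal.ofReal (‖y‖ ^ ν) := by fun_prop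
  simp only [setLIntegral_ball_zero_eq_smul μ hR hmeas, norm_smul, Real.norm_of_nonneg hR.le,
    Real.mul_rpow hR.le (norm_nonneg _), ENNReal.ofReal_mul (Real.rpow_nonneg hR.le ν)]
  rw [lintegral_const_mul _ hmeas, ← mul_assoc, ← ENNReal.ofReal_mul (by positivity),
    Real.rpow_add hR, Real.rpow_natCast, unitBallRpowIntegral]

theorem setLIntegral_ball_norm_sub_rpow (a : E) {R : ℝ} (hR : 0 < R) (ν : ℝ) :
    ∫⁻ y in ball a R, ENNReal.ofReal (‖y - a‖ ^ ν) ∂μ =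
      ENNReal.ofReal (R ^ (finrank ℝ E + ν)) * unitBallRpowIntegral μ ν := by
  have htranslate := (measurePreserving_add_right μ a).setLIntegral_comp_preimage_emb
    (measurableEmbedding_addRight a) (fun y => ENNReal.ofReal (‖y - a‖ ^ ν)) (ball a R)
  simp only [preimage_add_right_ball, sub_self, add_sub_cancel_right] at htranslate
  rw [← htranslate, setLIntegral_ball_zero_norm_rpow μ hR]

theorem unitBallRpowIntegral_lt_top [Nontrivial E] {ν : ℝ} (hν : -(finrank ℝ E : ℝ) < ν) :
    unitBallRpowIntegral μ ν < ⊤ := by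
  refine IntegrableOn.setLIntegral_lt_top
    (integrableOn_ball_of_norm_le_rpow (C := 1) (α := -ν) finrank_pos (by linarith) ?_
    (measurable_norm.pow_const ν).aestronglyMeasurable)
  refine ae_of_all _ fun y => ?_
  rw [neg_neg, one_mul, Real.norm_of_nonneg (by positivity)]

theorem unitBallRpowIntegral_pos [Nontrivial E] (ν : ℝ) : 0 < unitBallRpowIntegral μ ν := by
  have hmeas : Measurable fun y : E => ENNReal.ofReal (‖y‖ ^ ν) := by fun_prop
  have hsupport : {(0 : E)}ᶜ ⊆ Function.support fun y : E => ENNReal.ofReal (‖y‖ ^ ν) :=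
    fun y hy => by simpa using Real.rpow_pos_of_pos (norm_pos_iff.2 hy) ν
  rw [unitBallRpowIntegral, lintegral_pos_iff_support hmeas]
  calc 0 < μ (ball 0 1) := measure_ball_pos μ 0 one_pos
    _ = μ.restrict (ball 0 1) {0}ᶜ := by
      rw [Measure.restrict_apply (measurableSet_singleton 0).compl, ← sdiff_eq_compl_inter,
        measure_sdiff_null (measure_singleton 0)]
    _ ≤ _ := measure_mono hsupport

theorem setLIntegral_ball_norm_sub_rpow_le_of_nonpos [Nontrivial E] {ν : ℝ} (hν : ν ≤ 0)
    (a x : E) {r : ℝ} (hr : 0 < r) :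
    ∫⁻ y in ball x r, ENNReal.ofReal (‖y - a‖ ^ ν) ∂μ ≤ ENNReal.ofReal (r ^ (finrank ℝ E + ν)) *
      (ENNReal.ofReal (3 ^ (finrank ℝ E + ν)) * unitBallRpowIntegral μ ν + μ (ball 0 1)) := by
  -- Either `ball x r ⊆ ball a (3 * r)`, or the weight is at most `r ^ ν` on `ball x r`.
  rcases le_or_gt (dist x a) (2 * r) with hnear | hfar
  · calc ∫⁻ y in ball x r, ENNReal.ofReal (‖y - a‖ ^ ν) ∂μ
        ≤ ∫⁻ y in ball a (3 * r), ENNReal.ofReal (‖y - a‖ ^ ν) ∂μ :=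
          lintegral_mono_set fun y hy => by
            rw [mem_ball] at hy ⊢
            linarith [dist_triangle y x a]
      _ = ENNReal.ofReal (r ^ (finrank ℝ E + ν)) *
            (ENNReal.ofReal (3 ^ (finrank ℝ E + ν)) * unitBallRpowIntegral μ ν) := by
          rw [setLIntegral_ball_norm_sub_rpow μ a (by positivity),
            Real.mul_rpow (by norm_num) hr.le, ENNReal.ofReal_mul (by positivity)]
          ring
      _ ≤ _ := by gcongr; exact le_self_add
  · calc ∫⁻ y in ball x r, ENNReal.ofReal (‖y - a‖ ^ ν) ∂μ
        ≤ ∫⁻ _ in ball x r, ENNReal.ofReal (r ^ ν) ∂μ :=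
          setLIntegral_mono measurable_const fun y hy => by
            refine ENNReal.ofReal_le_ofReal (Real.rpow_le_rpow_of_nonpos hr ?_ hν)
            rw [mem_ball] at hy
            rw [← dist_eq_norm]
            linarith [dist_triangle_left x a y]
      _ = ENNReal.ofReal (r ^ (finrank ℝ E + ν)) * μ (ball 0 1) := by
          rw [setLIntegral_const, Measure.addHaar_ball μ x hr.le, ← mul_assoc,
            ← ENNReal.ofReal_mul (by positivity), Real.rpow_add hr, Real.rpow_natCast,
            mul_comm (r ^ ν)]
      _ ≤ _ := by gcongr; exact le_add_self

theorem addHaar_ball_rpow_neg_mul [Nontrivial E] (x : E) {r : ℝ} (hr : 0 < r) (lam s : ℝ)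
    (c : ℝ≥0∞) :
    μ (ball x r) ^ (-lam) * (ENNReal.ofReal (r ^ s) * c) =
      ENNReal.ofReal (r ^ (s - finrank ℝ E * lam)) * (μ (ball 0 1) ^ (-lam) * c) := by
  rw [Measure.addHaar_ball μ x hr.le, ← Real.rpow_natCast,
    ENNReal.mul_rpow_of_ne_top ENNReal.ofReal_ne_top measure_ball_lt_top.ne,
    ENNReal.ofReal_rpow_of_pos (by positivity), ← Real.rpow_mul hr.le, mul_mul_mul_comm,
    ← ENNReal.ofReal_mul (by positivity), ← Real.rpow_add hr, mul_neg, neg_add_eq_sub]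

theorem morreyQuotient_le_of_setLIntegral_le [Nontrivial E] {g : E → ℝ≥0∞} {x : E}
    {lam r r₀ s : ℝ} {c : ℝ≥0∞} (hr : 0 < r) (hrr₀ : r ≤ r₀) (hs : finrank ℝ E * lam ≤ s)
    (h : ∫⁻ y in ball x r, g y ∂μ ≤ ENNReal.ofReal (r ^ s) * c) :
    morreyQuotient μ lam g x r ≤
      ENNReal.ofReal (r₀ ^ (s - finrank ℝ E * lam)) * (μ (ball 0 1) ^ (-lam) * c) := by
  calc morreyQuotient μ lam g x r ≤ μ (ball x r) ^ (-lam) * (ENNReal.ofReal (r ^ s) * c) := by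
        rw [morreyQuotient]; gcongr
    _ = _ := addHaar_ball_rpow_neg_mul μ x hr lam s c
    _ ≤ _ := by gcongr

variable {a x₀ : E} {r₀ : ℝ}

theorem morreyQuotient_indicator_ball_center_eq [Nontrivial E] {r : ℝ} (hr : 0 < r)
    (hsub : ball a r ⊆ ball x₀ r₀) (lam ν : ℝ) :
    morreyQuotient μ lam ((ball x₀ r₀).indicator fun y => ENNReal.ofReal (‖y - a‖ ^ ν)) a r =
      ENNReal.ofReal (r ^ (finrank ℝ E + ν - finrank ℝ E * lam)) *
        (μ (ball 0 1) ^ (-lam) * unitBallRpowIntegral μ ν) := by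
  rw [morreyQuotient, setLIntegral_indicator measurableSet_ball, inter_eq_right.2 hsub,
    setLIntegral_ball_norm_sub_rpow μ a hr, addHaar_ball_rpow_neg_mul μ a hr]

theorem lintegral_indicator_ball_norm_sub_rpow_le (ha : a ∈ ball x₀ r₀) (ν : ℝ) :
    ∫⁻ y, (ball x₀ r₀).indicator (fun y => ENNReal.ofReal (‖y - a‖ ^ ν)) y ∂μ ≤
      ENNReal.ofReal ((2 * r₀) ^ (finrank ℝ E + ν)) * unitBallRpowIntegral μ ν := by
  rw [lintegral_indicator measurableSet_ball,
    ← setLIntegral_ball_norm_sub_rpow μ a (by linarith [pos_of_mem_ball ha])]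
  refine lintegral_mono_set fun y hy => ?_
  rw [mem_ball] at ha hy ⊢
  linarith [dist_triangle_right y a x₀]

theorem setLIntegral_indicator_ball_norm_sub_rpow_le_of_nonneg [Nontrivial E] {ν : ℝ}
    (hν : 0 ≤ ν) (ha : a ∈ ball x₀ r₀) (x : E) {r : ℝ} (hr : 0 ≤ r) :
    ∫⁻ y in ball x r, (ball x₀ r₀).indicator (fun y => ENNReal.ofReal (‖y - a‖ ^ ν)) y ∂μ ≤
      ENNReal.ofReal (r ^ (finrank ℝ E : ℝ)) *
        (ENNReal.ofReal ((2 * r₀) ^ ν) * μ (ball 0 1)) := by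
  calc _ ≤ ∫⁻ _ in ball x r, ENNReal.ofReal ((2 * r₀) ^ ν) ∂μ := by
        rw [setLIntegral_indicator measurableSet_ball]
        refine (setLIntegral_mono measurable_const fun y hy => ?_).trans
          (lintegral_mono_set inter_subset_right)
        refine ENNReal.ofReal_le_ofReal (Real.rpow_le_rpow (norm_nonneg _) ?_ hν)
        rw [← dist_eq_norm]
        linarith [mem_ball.1 hy.1, mem_ball.1 ha, dist_triangle_right y a x₀]
    _ = _ := by
        rw [setLIntegral_const, Measure.addHaar_ball μ x hr, Real.rpow_natCast]
        ring

theorem le_of_morreyQuotient_indicator_le [Nontrivial E] (ha : a ∈ ball x₀ r₀) {lam ν : ℝ}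
    {C : ℝ≥0∞} (hC : C ≠ ⊤) (hbound : ∀ r, 0 < r → morreyQuotient μ lam
      ((ball x₀ r₀).indicator fun y => ENNReal.ofReal (‖y - a‖ ^ ν)) a r ≤ C) :
    finrank ℝ E * lam - finrank ℝ E ≤ ν := by
  obtain ⟨δ, hδ, hsub⟩ := Metric.mem_nhds_iff.1 (isOpen_ball.mem_nhds ha)
  set c := μ (ball 0 1) ^ (-lam) * unitBallRpowIntegral μ ν
  have hc : c ≠ 0 :=
    mul_ne_zero (ENNReal.rpow_pos (measure_ball_pos μ 0 one_pos) measure_ball_lt_top.ne).ne'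
      (unitBallRpowIntegral_pos μ ν).ne'
  suffices 0 ≤ finrank ℝ E + ν - finrank ℝ E * lam by linarith
  refine nonneg_of_eventually_rpow_le (M := (C / c).toReal) ?_
  filter_upwards [Ioo_mem_nhdsGT hδ] with r ⟨hr, hrδ⟩
  rw [← ENNReal.ofReal_le_iff_le_toReal (ENNReal.div_ne_top hC hc),
    ENNReal.le_div_iff_mul_le (Or.inl hc) (Or.inr hC),
    ← morreyQuotient_indicator_ball_center_eq μ hr ((ball_subset_ball hrδ.le).trans hsub)]
  exact hbound r hr

theorem exists_morreyQuotient_indicator_le [Nontrivial E] (ha : a ∈ ball x₀ r₀) {lam ν : ℝ}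
    (hlam₀ : 0 ≤ lam) (hlam₁ : lam ≤ 1) (hν : -(finrank ℝ E : ℝ) < ν)
    (hνlam : finrank ℝ E * lam - finrank ℝ E ≤ ν) :
    ∃ C ≠ ⊤, ∀ x r, 0 < r → morreyQuotient μ lam
      ((ball x₀ r₀).indicator fun y => ENNReal.ofReal (‖y - a‖ ^ ν)) x r ≤ C := by
  have hr₀ : 0 < r₀ := pos_of_mem_ball ha
  have hI : unitBallRpowIntegral μ ν ≠ ⊤ := (unitBallRpowIntegral_lt_top μ hν).ne
  have hball {R : ℝ} (hR : 0 < R) : μ (ball 0 R) ^ (-lam) ≠ ⊤ :=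
    ENNReal.rpow_ne_top_of_ne_zero (measure_ball_pos μ 0 hR).ne' measure_ball_lt_top.ne
  have hv : μ (ball (0 : E) 1) ≠ ⊤ := measure_ball_lt_top.ne
  have hv_rpow := hball one_pos
  have hr₀_rpow := hball hr₀
  obtain ⟨K, hK, hsmall⟩ : ∃ K ≠ ⊤, ∀ x r, 0 < r → r ≤ r₀ → morreyQuotient μ lam
      ((ball x₀ r₀).indicator fun y => ENNReal.ofReal (‖y - a‖ ^ ν)) x r ≤ K := by
    rcases le_total ν 0 with hν₀ | hν₀
    · refine ⟨_, by finiteness, fun x r hr hrr₀ => morreyQuotient_le_of_setLIntegral_le μ hr hrr₀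
        (by linarith) ((lintegral_mono (indicator_le_self _ _)).trans
          (setLIntegral_ball_norm_sub_rpow_le_of_nonpos μ hν₀ a x hr))⟩
    · refine ⟨_, by finiteness, fun x r hr hrr₀ => morreyQuotient_le_of_setLIntegral_le μ hr hrr₀
        (by linarith [mul_le_of_le_one_right (Nat.cast_nonneg (α := ℝ) (finrank ℝ E)) hlam₁])
        (setLIntegral_indicator_ball_norm_sub_rpow_le_of_nonneg μ hν₀ ha x hr.le)⟩
  refine ⟨μ (ball 0 r₀) ^ (-lam) *
      (ENNReal.ofReal ((2 * r₀) ^ (finrank ℝ E + ν)) * unitBallRpowIntegral μ ν) + K,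
    by finiteness, fun x r hr => ?_⟩
  rcases le_total r₀ r with hlarge | hrr₀
  · refine (morreyQuotient_le_of_le_radius μ hlam₀ _ x hlarge).trans (le_trans ?_ le_self_add)
    gcongr
    exact lintegral_indicator_ball_norm_sub_rpow_le μ ha ν
  · exact (hsmall x r hr hrr₀).trans le_add_self

end PowerWeight

theorem stmt12_general (n : ℕ) (hn : 1 ≤ n) (p lam : ℝ) (hp : 1 ≤ p)
    (hlam0 : 0 ≤ lam) (hlam1 : lam ≤ 1)
    (ν : ℝ) (hν : -(n : ℝ) < ν)
    (a x₀ : EuclideanSpace ℝ (Fin n)) (r₀ : ℝ)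
    (ha : a ∈ Metric.ball x₀ r₀) :
    morreyNorm p lam (fun y => ‖y - a‖ ^ ν) ((Metric.ball x₀ r₀).indicator 1) < ⊤ ↔
      (n : ℝ) * lam - n ≤ ν := by
  have : Nonempty (Fin n) := ⟨⟨0, hn⟩⟩
  have hp₀ : 0 < p := by linarith
  have hdim : finrank ℝ (EuclideanSpace ℝ (Fin n)) = n := finrank_euclideanSpace_fin
  rw [morreyNorm_lt_top_iff hp₀, ofReal_abs_indicator_one_rpow_mul hp₀]
  constructor
  · rintro ⟨C, hC, hbound⟩
    simpa [hdim] using le_of_morreyQuotient_indicator_le volume ha hC fun r hr => hbound a r hr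
  · intro hνlam
    exact exists_morreyQuotient_indicator_le volume ha hlam0 hlam1 (by rwa [hdim]) (by rwa [hdim])

/-- Remark 4.4 (membership criterion): for `w(y) = |y-a|^ν` with `ν > -n` and
`a ∈ B(x₀,r₀)`, one has `χ_{B(x₀,r₀)} ∈ L^{p,λ}(ℝⁿ,w)` iff `ν ≥ nλ - n`. -/
theorem stmt12 (n : ℕ) (hn : 1 ≤ n) (p lam : ℝ) (hp : 1 ≤ p)
    (hlam0 : 0 ≤ lam) (hlam1 : lam ≤ 1)
    (ν : ℝ) (hν : -(n : ℝ) < ν)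
    (a x₀ : EuclideanSpace ℝ (Fin n)) (r₀ : ℝ) (hr₀ : 0 < r₀)
    (ha : a ∈ Metric.ball x₀ r₀) :
    morreyNorm p lam (fun y => ‖y - a‖ ^ ν) ((Metric.ball x₀ r₀).indicator 1) < ⊤ ↔
      (n : ℝ) * lam - n ≤ ν :=
  stmt12_general n hn p lam hp hlam0 hlam1 ν hν a x₀ r₀ ha
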